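/- For every integer k ≥ 0, setting μ = 18 + 2k, the following inequality of rational numbers holds: (13/15 − 3/2)² + (16/15 − 3/2)² + (19/15 − 3/2)² + (4/3 − 3/2)² + (22/15 − 3/2)² + (23/15 − 3/2)² + (5/3 − 3/2)² + (26/15 − 3/2)² + (29/15 − 3/2)² + (32/15 − 3/2)² + ∑_{l=1}^{2k+8} ((l + 2k + 9)/(2k+9) − 3/2)² ≤ (μ/12)·(32/15 − 13/15). -/

import Mathlib

/-! Apart from ten exceptional values, whose squared deviations from `3/2` add up to `121/90`,
the spectrum is the grid `1 + l/N`, `1 ≤ l < N = 2k + 9`, with total squared deviation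
`(N - 1)(N - 2)/(12 N)`. Against the bound `19 (N + 9)/180` this leaves the margin
`(4N² - 26N - 30)/(180 N)`, which is positive for `N ≥ 9`. -/

open Finset

section SquaredDeviations

variable {K : Type*} [Field K] [CharZero K]

theorem sum_Icc_sub_sq (c : K) (m : ℕ) :
    ∑ l ∈ Icc 1 m, ((l : K) - c) ^ 2
      = (m : K) * (m + 1) * (2 * m + 1) / 6 - c * m * (m + 1) + m * c ^ 2 := by
  induction m with
  | zero => simp
  | succ m ih =>
    rw [sum_Icc_succ_top (Nat.succ_pos m), ih]
    push_cast
    ring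

theorem sum_Icc_div_succ_sub_half_sq (n : ℕ) :
    ∑ l ∈ Icc 1 n, ((l : K) / (n + 1) - 1 / 2) ^ 2 = (n : K) * (n - 1) / (12 * (n + 1)) := by
  have hterm : ∀ l : ℕ, ((l : K) / (n + 1) - 1 / 2) ^ 2
      = ((l : K) - (n + 1) / 2) ^ 2 / (n + 1) ^ 2 := fun l => by
    field_simp
  simp_rw [hterm, ← sum_div, sum_Icc_sub_sq]
  field_simp
  ring

end SquaredDeviations

theorem stmt_11 (k : ℕ) :
    ((13/15 : ℚ) - 3/2) ^ 2 +
      ((16/15 : ℚ) - 3/2) ^ 2 +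
      ((19/15 : ℚ) - 3/2) ^ 2 +
      ((4/3 : ℚ) - 3/2) ^ 2 +
      ((22/15 : ℚ) - 3/2) ^ 2 +
      ((23/15 : ℚ) - 3/2) ^ 2 +
      ((5/3 : ℚ) - 3/2) ^ 2 +
      ((26/15 : ℚ) - 3/2) ^ 2 +
      ((29/15 : ℚ) - 3/2) ^ 2 +
      ((32/15 : ℚ) - 3/2) ^ 2 +
      ∑ l ∈ Finset.Icc 1 (2 * k + 8), (((l : ℚ) + 2 * (k : ℚ) + 9) / (2 * (k : ℚ) + 9) - 3/2) ^ 2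
    ≤ ((18 + 2 * (k : ℚ)) / 12) * (32/15 - 13/15) := by
  have hsum : ∑ l ∈ Icc 1 (2 * k + 8), (((l : ℚ) + 2 * k + 9) / (2 * k + 9) - 3/2) ^ 2
      = (2 * k + 8 : ℚ) * (2 * k + 7) / (12 * (2 * k + 9)) := by
    calc _ = ∑ l ∈ Icc 1 (2 * k + 8), ((l : ℚ) / ((2 * k + 8 : ℕ) + 1) - 1 / 2) ^ 2 :=
          sum_congr rfl fun l _ => by push_cast; field_simp; ring
      _ = _ := by rw [sum_Icc_div_succ_sub_half_sq]; push_cast; ring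
  rw [hsum]
  norm_num
  rw [← sub_nonneg]
  have hmargin : (18 + 2 * (k : ℚ)) / 12 * (19 / 15)
        - (121 / 90 + (2 * k + 8) * (2 * k + 7) / (12 * (2 * k + 9)))
      = (16 * k ^ 2 + 92 * k + 60) / (180 * (2 * k + 9)) := by
    field_simp
    ring
  rw [hmargin]
  positivity
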